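/- arXiv:1003.1187 — 3 statements merged into one kernel-verified Lean document; each statement's English description precedes it below -/
import Mathlib

section
/- If {X(t), t ∈ ℝ⁺} is wide-sense discrete scale invariant with index H and scale factor α^T (i.e., the self-similarity covariance conditions hold for the single dilation c = α^T), then Y(t) = α^{-tH} X(α^t) is wide-sense periodically correlated with period T: E[Y(t+T)] = E[Y(t)] and E[Y(t₁+T)Y(t₂+T)] = E[Y(t₁)Y(t₂)] for all t, t₁, t₂ ∈ ℝ. -/
open MeasureTheory Real

/-- the inverse quasi Lamperti transform of a wide-sense DSI process
with scale factor `α ^ T` is wide-sense periodically correlated with period `T`. -/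
theorem inverse_quasi_lamperti_of_DSI
    {Ω : Type*} [MeasureSpace Ω] [IsProbabilityMeasure (volume : Measure Ω)]
    (X : ℝ → Ω → ℝ) (Y : ℝ → Ω → ℝ) (H α : ℝ) (T : ℕ) (hH : 0 < H) (hα : 1 < α)
    (hsecond : ∀ t > (0 : ℝ), Integrable (fun ω => X t ω * X t ω))
    (hmean : ∀ t > (0 : ℝ), (∫ ω, X (α ^ (T : ℝ) * t) ω) = (α ^ (T : ℝ)) ^ H * ∫ ω, X t ω)
    (hcov : ∀ t₁ > (0 : ℝ), ∀ t₂ > (0 : ℝ),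
      (∫ ω, X (α ^ (T : ℝ) * t₁) ω * X (α ^ (T : ℝ) * t₂) ω)
        = (α ^ (T : ℝ)) ^ (2 * H) * ∫ ω, X t₁ ω * X t₂ ω)
    (hY : ∀ t : ℝ, ∀ ω, Y t ω = α ^ (-(t * H)) * X (α ^ t) ω) :
    (∀ t : ℝ, (∫ ω, Y (t + T) ω) = ∫ ω, Y t ω) ∧
    (∀ t₁ t₂ : ℝ, (∫ ω, Y (t₁ + T) ω * Y (t₂ + T) ω) = ∫ ω, Y t₁ ω * Y t₂ ω) := by
  have hα0 : (0:ℝ) < α := lt_trans one_pos hα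
  have hexp : ∀ t : ℝ, α ^ (t + (T:ℝ)) = α ^ (T:ℝ) * α ^ t := by
    intro t; rw [← rpow_add hα0]; ring_nf
  constructor
  · intro t
    simp only [hY]
    rw [integral_const_mul, integral_const_mul, hexp t,
      hmean (α ^ t) (rpow_pos_of_pos hα0 t), ← mul_assoc]
    congr 1
    rw [← rpow_mul hα0.le, ← rpow_add hα0]
    congr 1
    ring
  · intro t₁ t₂
    simp only [hY]
    have hring : ∀ (a b : ℝ) (f g : Ω → ℝ) (ω : Ω),
        (a * f ω) * (b * g ω) = (a * b) * (f ω * g ω) := by intros; ring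
    simp only [hring]
    rw [integral_const_mul, integral_const_mul, hexp t₁, hexp t₂,
      hcov (α ^ t₁) (rpow_pos_of_pos hα0 t₁) (α ^ t₂) (rpow_pos_of_pos hα0 t₂),
      ← mul_assoc]
    congr 1
    rw [← rpow_mul hα0.le, ← rpow_add hα0, ← rpow_add hα0, ← rpow_add hα0]
    congr 1
    ring
end

section
/- Let W(κ) be a wide-sense Markov process (covariance R(κ₁,κ₂) = G(min)H(max), H nowhere zero, R_κ(0) ≠ 0) that is also discrete-time scale invariant with scale α^T in the sense that R_{κ+q}(τ) = α^{2TH_0} R_κ(τ) for all κ, τ. Define f̃(r) = ∏_{j=0}^{r} f(j) for r ≥ 0, f̃(-1) = 1, where f(j) = R_j(1)/R_j(0). Then for every κ ≥ 0 with κ = nq + ν, 0 ≤ ν ≤ q-1, every t ≥ 0 and 0 ≤ s ≤ q-1 with κ + s - 1 ≥ -1: R_κ(tq + s) = [f̃(q-1)]^t · f̃(κ+s-1) · [f̃(κ-1)]^{-1} · R_κ(0). -/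
/-!
For `τ ≥ 0` the lag covariance factors as `R_κ(τ) = G(κ) H(κ + τ)`. Comparing scale invariance at
lag `τ` with that at lag `0` eliminates both `G` and the scale factor and leaves
`H(q + τ) = (H(q) / H(0)) H(τ)`, so `H` is multiplicatively periodic with period `q`.
Meanwhile `f(j) = H(j + 1) / H(j)`, so `f̃(r) = H(r + 1) / H(0)` telescopes, and the claimed
formula is `G(κ) H(tq + κ + s) = (H(q) / H(0))^t G(κ) H(κ + s)`.
-/

open Finset

theorem prod_range_div_of_ne_zero {K : Type*} [Field K] (u : ℕ → K) (hu : ∀ n, u n ≠ 0)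
    (n : ℕ) : ∏ i ∈ range n, u (i + 1) / u i = u n / u 0 := by
  simpa using congrArg Units.val (prod_range_div (fun i => Units.mk0 (u i) (hu i)) n)

theorem apply_add_eq_div_mul_of_mul_apply_add_eq {H : ℤ → ℝ} {q : ℤ} {a b : ℝ} (ha : a ≠ 0)
    (hH₀ : H 0 ≠ 0) (h : ∀ τ, 0 ≤ τ → a * H (q + τ) = b * H τ) {τ : ℤ} (hτ : 0 ≤ τ) :
    H (q + τ) = H q / H 0 * H τ := by
  have h₀ : a * H q = b * H 0 := by simpa using h 0 le_rfl
  have key : a * (H (q + τ) * H 0) = a * (H q * H τ) := by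
    linear_combination H 0 * h τ hτ - H τ * h₀
  rw [div_mul_eq_mul_div, eq_div_iff hH₀]
  exact mul_left_cancel₀ ha key

theorem apply_mul_add_eq_pow_mul {M : Type*} [Monoid M] {H : ℤ → M} {q : ℤ} {ρ : M}
    (hq : 0 ≤ q) (h : ∀ m, 0 ≤ m → H (q + m) = ρ * H m) (t : ℕ) {m : ℤ} (hm : 0 ≤ m) :
    H (t * q + m) = ρ ^ t * H m := by
  induction t with
  | zero => simp
  | succ n ih =>
    have hnm : 0 ≤ (n : ℤ) * q + m := by positivity
    rw [show ((n + 1 : ℕ) : ℤ) * q + m = q + (n * q + m) by push_cast; ring, h _ hnm, ih,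
      pow_succ', mul_assoc]

section WideSenseMarkov

variable {R Rl : ℤ → ℤ → ℝ} {G H : ℤ → ℝ}

theorem lagCov_eq_of_nonneg (hfact : ∀ κ₁ κ₂, R κ₁ κ₂ = G (min κ₁ κ₂) * H (max κ₁ κ₂))
    (hRl : ∀ κ τ, Rl κ τ = R κ (κ + τ)) (κ : ℤ) {τ : ℤ} (hτ : 0 ≤ τ) :
    Rl κ τ = G κ * H (κ + τ) := by
  rw [hRl, hfact, min_eq_left (by omega), max_eq_right (by omega)]

theorem ne_zero_of_cov_self_ne_zero (hfact : ∀ κ₁ κ₂, R κ₁ κ₂ = G (min κ₁ κ₂) * H (max κ₁ κ₂))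
    {κ : ℤ} (hR : R κ κ ≠ 0) : G κ ≠ 0 := by
  rw [hfact, min_self, max_self] at hR
  exact left_ne_zero_of_mul hR

end WideSenseMarkov

theorem partialProd_eq_div {H f ft : ℤ → ℝ} (hH : ∀ κ, H κ ≠ 0)
    (hf : ∀ j, f j = H (j + 1) / H j) (hftneg : ft (-1) = 1)
    (hft : ∀ r : ℕ, ft r = ∏ j ∈ range (r + 1), f j) {m : ℤ} (hm : -1 ≤ m) :
    ft m = H (m + 1) / H 0 := by
  obtain rfl | hm := hm.eq_or_lt
  · simp [hftneg, hH 0]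
  · lift m to ℕ using by omega
    rw [hft]
    simp_rw [hf]
    exact_mod_cast prod_range_div_of_ne_zero (fun n : ℕ => H n) (fun n => hH n) (m + 1)

theorem DT_ESIM_covariance_characterization_general
    (R : ℤ → ℤ → ℝ) (G Hf : ℤ → ℝ) (α H₀ : ℝ) (T : ℕ) (q : ℤ)
    (hfact : ∀ κ₁ κ₂ : ℤ, R κ₁ κ₂ = G (min κ₁ κ₂) * Hf (max κ₁ κ₂))
    (hHne : ∀ κ : ℤ, Hf κ ≠ 0)
    (hR0 : ∀ κ : ℤ, R κ κ ≠ 0)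
    -- lag covariance
    (Rl : ℤ → ℤ → ℝ)
    (hRl : ∀ κ τ : ℤ, Rl κ τ = R κ (κ + τ))
    -- discrete time scale invariance of the sampled process
    (hscale : ∀ κ τ : ℤ, Rl (κ + q) τ = α ^ (2 * (T : ℝ) * H₀) * Rl κ τ)
    (f : ℤ → ℝ)
    (hf : ∀ j : ℤ, f j = Rl j 1 / Rl j 0)
    (ft : ℤ → ℝ)
    (hftneg : ft (-1) = 1)
    (hft : ∀ r : ℕ, ft (r : ℤ) = ∏ j ∈ Finset.range (r + 1), f (j : ℤ)) :
    ∀ κ : ℤ, 0 ≤ κ → ∀ t : ℕ, ∀ s : ℤ, 0 ≤ s → s ≤ q - 1 → -1 ≤ κ + s - 1 →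
      Rl κ ((t : ℤ) * q + s)
        = (ft (q - 1)) ^ t * ft (κ + s - 1) * (ft (κ - 1))⁻¹ * Rl κ 0 := by
  intro κ hκ t s hs hsq hκs
  have hRl' := lagCov_eq_of_nonneg hfact hRl
  have hG : ∀ κ, G κ ≠ 0 := fun κ => ne_zero_of_cov_self_ne_zero hfact (hR0 κ)
  have hperiod : ∀ m, 0 ≤ m → Hf (q + m) = Hf q / Hf 0 * Hf m :=
    fun m => apply_add_eq_div_mul_of_mul_apply_add_eq (hG q) (hHne 0)
      (b := α ^ (2 * (T : ℝ) * H₀) * G 0) fun τ hτ => by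
        simpa only [zero_add, hRl' _ hτ, mul_assoc] using hscale 0 τ
  have hfH : ∀ j, f j = Hf (j + 1) / Hf j := fun j => by
    rw [hf, hRl' j zero_le_one, hRl' j le_rfl, add_zero, mul_div_mul_left _ _ (hG j)]
  have hft' : ∀ m, -1 ≤ m → ft m = Hf (m + 1) / Hf 0 :=
    fun _ => partialProd_eq_div hHne hfH hftneg hft
  have hq : 0 ≤ q := by omega
  rw [hRl' κ (by positivity), show κ + (t * q + s) = t * q + (κ + s) by ring,
    apply_mul_add_eq_pow_mul (by omega) hperiod t (by omega), hft' (q - 1) (by omega),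
    hft' _ hκs, hft' (κ - 1) (by omega), hRl' κ le_rfl]
  simp only [sub_add_cancel, add_zero]
  field_simp [hHne]

/-- covariance characterization of a wide-sense Markov, discrete-time
scale invariant process: for `κ ≥ 0`, `t ≥ 0`, `0 ≤ s ≤ q-1` with `κ+s-1 ≥ -1`,
`R_κ(tq+s) = f̃(q-1)^t · f̃(κ+s-1) · f̃(κ-1)⁻¹ · R_κ(0)`. -/
theorem DT_ESIM_covariance_characterization
    (R : ℤ → ℤ → ℝ) (G Hf : ℤ → ℝ) (α H₀ : ℝ) (T : ℕ) (q : ℤ)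
    (hα : 1 < α) (hH₀ : 0 < H₀) (hT : 1 ≤ T) (hq : 1 ≤ q)
    (hfact : ∀ κ₁ κ₂ : ℤ, R κ₁ κ₂ = G (min κ₁ κ₂) * Hf (max κ₁ κ₂))
    (hHne : ∀ κ : ℤ, Hf κ ≠ 0)
    (hR0 : ∀ κ : ℤ, R κ κ ≠ 0)
    -- lag covariance
    (Rl : ℤ → ℤ → ℝ)
    (hRl : ∀ κ τ : ℤ, Rl κ τ = R κ (κ + τ))
    -- discrete time scale invariance of the sampled process
    (hscale : ∀ κ τ : ℤ, Rl (κ + q) τ = α ^ (2 * (T : ℝ) * H₀) * Rl κ τ)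
    (f : ℤ → ℝ)
    (hf : ∀ j : ℤ, f j = Rl j 1 / Rl j 0)
    (ft : ℤ → ℝ)
    (hftneg : ft (-1) = 1)
    (hft : ∀ r : ℕ, ft (r : ℤ) = ∏ j ∈ Finset.range (r + 1), f (j : ℤ)) :
    ∀ κ : ℤ, 0 ≤ κ → ∀ t : ℕ, ∀ s : ℤ, 0 ≤ s → s ≤ q - 1 → -1 ≤ κ + s - 1 →
      Rl κ ((t : ℤ) * q + s)
        = (ft (q - 1)) ^ t * ft (κ + s - 1) * (ft (κ - 1))⁻¹ * Rl κ 0 :=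
  DT_ESIM_covariance_characterization_general R G Hf α H₀ T q hfact hHne hR0 Rl hRl hscale f hf ft
    hftneg hft
end

section
/- Let B be standard Brownian motion, H > 0, λ > 1, and define the simple Brownian motion X(t) = Σ_{n=1}^{∞} λ^{n(H - 1/2)} 1_{[λ^{n-1}, λ^n)}(t) B(t) for t ≥ 1. Then X is wide-sense discrete scale invariant with index H and scale λ: E[X(λt₁)X(λt₂)] = λ^{2H} E[X(t₁)X(t₂)] for all t₁, t₂ ≥ 1. -/
open MeasureTheory Real

lemma tsum_indicator_single (lam : ℝ) (hlam : 1 < lam) (t : ℝ) (n : ℕ)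
    (h1 : lam ^ n ≤ t) (h2 : t < lam ^ (n + 1)) (c : ℕ → ℝ) (b : ℝ) :
    (∑' m : ℕ, c m * (Set.Ico (lam ^ m) (lam ^ (m + 1))).indicator
      (fun _ => (1 : ℝ)) t * b) = c n * b := by
  have hlam1 : (1 : ℝ) ≤ lam := hlam.le
  rw [tsum_eq_single n]
  · rw [Set.indicator_of_mem (Set.mem_Ico.2 ⟨h1, h2⟩), mul_one]
  · intro m hm
    rw [Set.indicator_of_notMem, mul_zero, zero_mul]
    rintro ⟨hm1, hm2⟩
    rcases lt_or_gt_of_ne hm with h | h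
    · exact absurd hm2 (not_lt.2 ((pow_le_pow_right₀ hlam1 h).trans h1))
    · exact absurd hm1 (not_le.2 (h2.trans_le (pow_le_pow_right₀ hlam1 h)))

/-- simple Brownian motion
`X(t) = Σ_{n≥1} λ^{n(H-1/2)} 1_{[λ^{n-1},λ^n)}(t) B(t)` is wide-sense DSI with
index `H` and scale `λ`. -/
theorem simple_brownian_motion_is_DSI
    {Ω : Type*} [MeasureSpace Ω] [IsProbabilityMeasure (volume : Measure Ω)]
    (B : ℝ → Ω → ℝ) (X : ℝ → Ω → ℝ) (H lam : ℝ) (hH : 0 < H) (hlam : 1 < lam)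
    (hBcov : ∀ t₁ t₂ : ℝ, 0 ≤ t₁ → 0 ≤ t₂ → (∫ ω, B t₁ ω * B t₂ ω) = min t₁ t₂)
    (hX : ∀ t : ℝ, 1 ≤ t → ∀ ω, X t ω
      = ∑' n : ℕ, lam ^ (((n : ℝ) + 1) * (H - 1 / 2))
          * (Set.Ico (lam ^ n) (lam ^ (n + 1))).indicator (fun _ => (1 : ℝ)) t
          * B t ω) :
    ∀ t₁ t₂ : ℝ, 1 ≤ t₁ → 1 ≤ t₂ →
      (∫ ω, X (lam * t₁) ω * X (lam * t₂) ω)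
        = lam ^ (2 * H) * ∫ ω, X t₁ ω * X t₂ ω := by
  have hlam0 : (0 : ℝ) < lam := lt_trans one_pos hlam
  intro t₁ t₂ ht₁ ht₂
  obtain ⟨n₁, hn₁, hn₁'⟩ := exists_nat_pow_near ht₁ hlam
  obtain ⟨n₂, hn₂, hn₂'⟩ := exists_nat_pow_near ht₂ hlam
  set c : ℕ → ℝ := fun n => lam ^ (((n : ℝ) + 1) * (H - 1 / 2)) with hc
  have hXt : ∀ (t : ℝ) (n : ℕ), 1 ≤ t → lam ^ n ≤ t → t < lam ^ (n + 1) →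
      ∀ ω, X t ω = c n * B t ω := by
    intro t n ht h1 h2 ω
    rw [hX t ht ω]
    exact tsum_indicator_single lam hlam t n h1 h2 c (B t ω)
  have hlt : ∀ t : ℝ, 1 ≤ t → 1 ≤ lam * t :=
    fun t ht => by nlinarith
  have hmul : ∀ (t : ℝ) (n : ℕ), lam ^ n ≤ t → t < lam ^ (n + 1) →
      lam ^ (n + 1) ≤ lam * t ∧ lam * t < lam ^ (n + 1 + 1) := by
    intro t n h1 h2
    constructor
    · rw [pow_succ, mul_comm]
      exact mul_le_mul_of_nonneg_left h1 hlam0.le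
    · rw [pow_succ, mul_comm (lam ^ (n+1))]
      exact mul_lt_mul_of_pos_left h2 hlam0
  obtain ⟨hm₁, hm₁'⟩ := hmul t₁ n₁ hn₁ hn₁'
  obtain ⟨hm₂, hm₂'⟩ := hmul t₂ n₂ hn₂ hn₂'
  have e1 : ∀ ω, X (lam * t₁) ω * X (lam * t₂) ω
      = (c (n₁ + 1) * c (n₂ + 1)) * (B (lam * t₁) ω * B (lam * t₂) ω) := by
    intro ω
    rw [hXt _ _ (hlt t₁ ht₁) hm₁ hm₁' ω, hXt _ _ (hlt t₂ ht₂) hm₂ hm₂' ω]; ring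
  have e2 : ∀ ω, X t₁ ω * X t₂ ω
      = (c n₁ * c n₂) * (B t₁ ω * B t₂ ω) := by
    intro ω
    rw [hXt _ _ ht₁ hn₁ hn₁' ω, hXt _ _ ht₂ hn₂ hn₂' ω]; ring
  simp_rw [e1, e2, integral_const_mul]
  rw [hBcov _ _ (by positivity) (by positivity),
      hBcov _ _ (by linarith) (by linarith)]
  have hmin : min (lam * t₁) (lam * t₂) = lam * min t₁ t₂ := by
    rcases le_total t₁ t₂ with h | h
    · rw [min_eq_left h, min_eq_left (by nlinarith)]
    · rw [min_eq_right h, min_eq_right (by nlinarith)]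
  rw [hmin, hc]
  simp only [Nat.cast_add, Nat.cast_one]
  rw [show (lam : ℝ) * min t₁ t₂ = lam ^ (1:ℝ) * min t₁ t₂ by rw [Real.rpow_one]]
  rw [show lam ^ (((n₁:ℝ)+1+1)*(H-1/2)) * lam ^ (((n₂:ℝ)+1+1)*(H-1/2)) * (lam ^ (1:ℝ) * min t₁ t₂)
      = lam ^ ((((n₁:ℝ)+1+1)*(H-1/2)) + (((n₂:ℝ)+1+1)*(H-1/2)) + 1) * min t₁ t₂ by
    rw [Real.rpow_add hlam0, Real.rpow_add hlam0]; ring]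
  rw [show lam ^ (2*H) * (lam ^ (((n₁:ℝ)+1)*(H-1/2)) * lam ^ (((n₂:ℝ)+1)*(H-1/2)) * min t₁ t₂)
      = lam ^ (2*H + (((n₁:ℝ)+1)*(H-1/2)) + (((n₂:ℝ)+1)*(H-1/2))) * min t₁ t₂ by
    rw [Real.rpow_add hlam0, Real.rpow_add hlam0]; ring]
  congr 1
  ring
end
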